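/- arXiv:1912.10577 — 2 statements merged into one kernel-verified Lean document; each statement's English description precedes it below -/
import Mathlib

section
/- Let X ~ N(μ₁, σ₁²) and Y ~ N(μ₂, σ₂²) with μ₁ ≥ μ₂ and σ₁ ≥ σ₂ ≥ 0. Then X is stochastically optimistic with respect to Y, i.e., E[u(X)] ≥ E[u(Y)] for every convex increasing u: ℝ → ℝ for which both expectations exist. -/
/-!
Write `X = μ₁ + σ₁ Z` and `Y = μ₂ + σ₂ Z` with `Z` standard normal. Since `Z` and `-Z` have the
same law, `2 E[u(Y)] = E[u(μ₂ + σ₂ Z) + u(μ₂ - σ₂ Z)]`, and likewise for `X`. Pointwise, raising the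
centre from `μ₂` to `μ₁` increases the symmetric sum because `u` is nondecreasing, and widening the
spread from `σ₂ |Z|` to `σ₁ |Z|` increases it because `s ↦ u(a + s) + u(a - s)` is convex and even,
hence nondecreasing in `|s|`.
-/

open MeasureTheory ProbabilityTheory

/-- `X` is stochastically optimistic with respect to `Y`: `E[u(X)] ≥ E[u(Y)]` for every
convex increasing `u : ℝ → ℝ` (for which the expectations exist). -/
def StochasticallyOptimistic {Ω₁ Ω₂ : Type*} [MeasurableSpace Ω₁] [MeasurableSpace Ω₂]
    (P : Measure Ω₁) (Q : Measure Ω₂) (X : Ω₁ → ℝ) (Y : Ω₂ → ℝ) : Prop :=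
  ∀ u : ℝ → ℝ, ConvexOn ℝ Set.univ u → Monotone u →
    Integrable (fun ω => u (X ω)) P → Integrable (fun ω => u (Y ω)) Q →
    ∫ ω, u (Y ω) ∂Q ≤ ∫ ω, u (X ω) ∂P

open Set

theorem ConvexOn.map_add_add_map_sub_le_of_abs_le {u : ℝ → ℝ} (hu : ConvexOn ℝ univ u) (a : ℝ)
    {s t : ℝ} (hst : |s| ≤ |t|) :
    u (a + s) + u (a - s) ≤ u (a + t) + u (a - t) := by
  set g : ℝ → ℝ := fun x => u (a + x) + u (a - x) with hg_def
  have hg : ConvexOn ℝ univ g :=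
    (hu.comp_affineMap (AffineMap.const ℝ ℝ a + AffineMap.id ℝ ℝ)).add
      (hu.comp_affineMap (AffineMap.const ℝ ℝ a - AffineMap.id ℝ ℝ))
  have hg_even : ∀ x, g (-x) = g x := fun x => by
    simp only [hg_def, sub_neg_eq_add, ← sub_eq_add_neg, add_comm]
  have hg_abs : g |t| = g t := by
    rcases abs_choice t with h | h <;> rw [h]
    exact hg_even t
  have hs : s ∈ segment ℝ (-|t|) |t| := by
    rw [segment_eq_Icc (by simp)]
    exact abs_le.mp hst
  calc g s ≤ max (g (-|t|)) (g |t|) := hg.le_on_segment (mem_univ _) (mem_univ _) hs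
    _ = g t := by rw [hg_even, max_self, hg_abs]

theorem ConvexOn.map_add_add_map_sub_le_of_le_of_abs_le {u : ℝ → ℝ} (hu : ConvexOn ℝ univ u)
    (hm : Monotone u) {a b s t : ℝ} (hab : a ≤ b) (hst : |s| ≤ |t|) :
    u (a + s) + u (a - s) ≤ u (b + t) + u (b - t) :=
  calc u (a + s) + u (a - s) ≤ u (b + s) + u (b - s) := by
        gcongr <;> apply hm <;> linarith
    _ ≤ u (b + t) + u (b - t) := hu.map_add_add_map_sub_le_of_abs_le b hst

theorem integral_add_comp_neg_eq_two_mul {γ : Measure ℝ} [γ.IsNegInvariant] {f : ℝ → ℝ}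
    (hf : Integrable f γ) :
    ∫ z, (f z + f (-z)) ∂γ = 2 * ∫ z, f z ∂γ := by
  rw [integral_add hf hf.comp_neg, integral_neg_eq_self, two_mul]

theorem integral_comp_add_mul_le_of_isNegInvariant {γ : Measure ℝ} [γ.IsNegInvariant]
    {u : ℝ → ℝ} (hu : ConvexOn ℝ univ u) (hm : Monotone u) {μ₁ μ₂ σ₁ σ₂ : ℝ}
    (hμ : μ₂ ≤ μ₁) (hσ : |σ₂| ≤ |σ₁|)
    (h₁ : Integrable (fun z => u (μ₁ + σ₁ * z)) γ) (h₂ : Integrable (fun z => u (μ₂ + σ₂ * z)) γ) :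
    ∫ z, u (μ₂ + σ₂ * z) ∂γ ≤ ∫ z, u (μ₁ + σ₁ * z) ∂γ := by
  have hsym : ∀ z, u (μ₂ + σ₂ * z) + u (μ₂ + σ₂ * -z) ≤ u (μ₁ + σ₁ * z) + u (μ₁ + σ₁ * -z) :=
    fun z => by
      have hσz : |σ₂ * z| ≤ |σ₁ * z| := by
        simpa only [abs_mul] using mul_le_mul_of_nonneg_right hσ (abs_nonneg z)
      simpa only [mul_neg, ← sub_eq_add_neg] using
        hu.map_add_add_map_sub_le_of_le_of_abs_le hm hμ hσz
  have key : ∫ z, (u (μ₂ + σ₂ * z) + u (μ₂ + σ₂ * -z)) ∂γ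
      ≤ ∫ z, (u (μ₁ + σ₁ * z) + u (μ₁ + σ₁ * -z)) ∂γ :=
    integral_mono (h₂.add h₂.comp_neg) (h₁.add h₁.comp_neg) hsym
  rw [integral_add_comp_neg_eq_two_mul h₂, integral_add_comp_neg_eq_two_mul h₁] at key
  linarith

instance isNegInvariant_gaussianReal_zero (v : NNReal) : (gaussianReal 0 v).IsNegInvariant :=
  ⟨by simpa [Measure.neg_def] using gaussianReal_map_neg (μ := 0) (v := v)⟩

theorem gaussianReal_eq_map_add_mul (μ σ : ℝ) :
    gaussianReal μ ⟨σ ^ 2, sq_nonneg σ⟩ = (gaussianReal 0 1).map (fun z => μ + σ * z) := by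
  rw [show (fun z => μ + σ * z) = (μ + ·) ∘ (σ * ·) from rfl,
    ← Measure.map_map (measurable_const_add μ) (measurable_const_mul σ),
    gaussianReal_map_const_mul, gaussianReal_map_const_add]
  congr 1
  · simp
  · ext; exact (mul_one _).symm

theorem integral_gaussianReal_eq_integral_comp_add_mul {f : ℝ → ℝ} (hf : Measurable f)
    (μ σ : ℝ) :
    ∫ x, f x ∂gaussianReal μ ⟨σ ^ 2, sq_nonneg σ⟩ = ∫ z, f (μ + σ * z) ∂gaussianReal 0 1 := by
  rw [gaussianReal_eq_map_add_mul, integral_map (by fun_prop) hf.aestronglyMeasurable]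

theorem integrable_gaussianReal_iff_integrable_comp_add_mul {f : ℝ → ℝ} (hf : Measurable f)
    (μ σ : ℝ) :
    Integrable f (gaussianReal μ ⟨σ ^ 2, sq_nonneg σ⟩) ↔
      Integrable (fun z => f (μ + σ * z)) (gaussianReal 0 1) := by
  rw [gaussianReal_eq_map_add_mul, integrable_map_measure hf.aestronglyMeasurable (by fun_prop)]
  rfl

theorem gaussian_stochasticallyOptimistic (μ₁ μ₂ σ₁ σ₂ : ℝ)
    (hμ : μ₂ ≤ μ₁) (hσ₂ : 0 ≤ σ₂) (hσ : σ₂ ≤ σ₁) :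
    StochasticallyOptimistic
      (gaussianReal μ₁ ⟨σ₁ ^ 2, sq_nonneg σ₁⟩)
      (gaussianReal μ₂ ⟨σ₂ ^ 2, sq_nonneg σ₂⟩)
      (fun x => x) (fun x => x) := by
  intro u hu hm h₁ h₂
  have hu_meas : Measurable u := hm.measurable
  rw [integrable_gaussianReal_iff_integrable_comp_add_mul hu_meas] at h₁ h₂
  rw [integral_gaussianReal_eq_integral_comp_add_mul hu_meas,
    integral_gaussianReal_eq_integral_comp_add_mul hu_meas]
  exact integral_comp_add_mul_le_of_isNegInvariant hu hm hμ (abs_le_abs_of_nonneg hσ₂ hσ) h₁ h₂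
end

section
/- Let X₁,...,Xₙ and Y₁,...,Yₙ be two collections, each of independent real random variables, with X_i ≥_SO Y_i for each i. Then for f(x₁,...,xₙ) = max_i x_i, we have f(X₁,...,Xₙ) ≥_SO f(Y₁,...,Yₙ). -/
/-!
Truncation reduces the claim to `E[max(c, u(Y₁), …, u(Yₙ))] ≤ E[max(c, u(X₁), …, u(Xₙ))]` for
every floor `c`, since `u` is increasing and the truncated integrals converge as `c → -∞`; the
floor is needed because `u(Xᵢ)` itself need not be integrable. Each coordinate satisfies
`E[max(u(Yᵢ), c)] ≤ E[max(u(Xᵢ), c)]`, the test function `max(u, c)` being convex and increasing.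
By independence both sides are integrals against product measures, and the coordinates are
exchanged one at a time: with the others frozen at `y`, the integrand is `max(t, c')` in the
remaining coordinate `t`, for `c' = max(c, max y)`, so the one-dimensional comparison applies
(Fubini).
-/

open MeasureTheory ProbabilityTheory

open Finset Filter Topology

theorem Finset.max_sup'_eq_fold_max {ι α : Type*} [LinearOrder α] {s : Finset ι}
    (hs : s.Nonempty) (f : ι → α) (c : α) : max (s.sup' hs f) c = s.fold max c f :=
  eq_of_forall_ge_iff fun d => by simp [fold_max_le, and_comm]

theorem Finset.fold_max_max {ι α : Type*} [LinearOrder α] (s : Finset ι) (f : ι → α) (a c : α) :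
    s.fold max (max a c) f = max a (s.fold max c f) :=
  eq_of_forall_ge_iff fun d => by simp [fold_max_le, and_assoc]

theorem Fin.fold_max_cons {α : Type*} [LinearOrder α] {m : ℕ} (a : α) (x : Fin m → α) (c : α) :
    univ.fold max c (Fin.cons a x : Fin (m + 1) → α) = max a (univ.fold max c x) :=
  eq_of_forall_ge_iff fun d => by simp [fold_max_le, Fin.forall_fin_succ, and_left_comm]

theorem Monotone.max_apply_sup'_eq_fold_max {ι α β : Type*} [LinearOrder α] [LinearOrder β]
    {u : α → β} (hu : Monotone u) {s : Finset ι} (hs : s.Nonempty) (x : ι → α) (c : β) :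
    max (u (s.sup' hs x)) c = s.fold max c fun i => u (x i) := by
  rw [apply_sup'_eq_sup'_comp hs u hu.map_sup, max_sup'_eq_fold_max]
  rfl

theorem abs_max_le_abs_of_nonpos {a c : ℝ} (hc : c ≤ 0) : |max a c| ≤ |a| := by
  rcases le_total a c with hac | hca
  · rw [max_eq_right hac, abs_of_nonpos hc, abs_of_nonpos (hac.trans hc)]
    exact neg_le_neg hac
  · rw [max_eq_left hca]

theorem tendsto_integral_max_atBot {α : Type*} [MeasurableSpace α] {μ : Measure α} {f : α → ℝ}
    (hf : Integrable f μ) :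
    Tendsto (fun c => ∫ a, max (f a) c ∂μ) atBot (𝓝 (∫ a, f a ∂μ)) :=
  tendsto_integral_filter_of_dominated_convergence (fun a => |f a|)
    (Eventually.of_forall fun _ => hf.aestronglyMeasurable.sup aestronglyMeasurable_const)
    ((eventually_le_atBot 0).mono fun _ hc => ae_of_all _ fun _ => abs_max_le_abs_of_nonpos hc)
    hf.abs
    (ae_of_all _ fun a => tendsto_const_nhds.congr' <|
      (eventually_le_atBot (f a)).mono fun _ hc => (max_eq_left hc).symm)

theorem integral_le_of_forall_integral_max_le {α β : Type*} [MeasurableSpace α]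
    [MeasurableSpace β] {μ : Measure α} {ν : Measure β} {f : α → ℝ} {g : β → ℝ}
    (hf : Integrable f μ) (hg : Integrable g ν) (h : ∀ c, ∫ a, max (f a) c ∂μ ≤ ∫ b, max (g b) c ∂ν) :
    ∫ a, f a ∂μ ≤ ∫ b, g b ∂ν :=
  le_of_tendsto_of_tendsto' (tendsto_integral_max_atBot hf) (tendsto_integral_max_atBot hg) h

theorem integrable_max_const_of_le {α : Type*} [MeasurableSpace α] {μ : Measure α}
    [IsFiniteMeasure μ] {f g : α → ℝ} (hf : AEStronglyMeasurable f μ) (hg : Integrable g μ)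
    (hfg : ∀ a, f a ≤ g a) (c : ℝ) : Integrable (fun a => max (f a) c) μ :=
  integrable_of_le_of_le (hf.sup aestronglyMeasurable_const)
    (ae_of_all _ fun a => le_max_right (f a) c) (ae_of_all _ fun a => max_le_max_right c (hfg a))
    (integrable_const c) (hg.sup (integrable_const c))

theorem measurable_fold_max {ι : Type*} (s : Finset ι) (c : ℝ) :
    Measurable fun x : ι → ℝ => s.fold max c x := by
  classical
  induction s using Finset.induction_on with
  | empty => simp
  | insert i s hi ih => simpa only [fold_insert hi] using (measurable_pi_apply i).max ih

theorem integral_pi_fin_succ {α E : Type*} [MeasurableSpace α] [NormedAddCommGroup E]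
    [NormedSpace ℝ E] {m : ℕ} (ν : Fin (m + 1) → Measure α) [∀ i, SigmaFinite (ν i)]
    (F : (Fin (m + 1) → α) → E) :
    ∫ x, F x ∂Measure.pi ν =
      ∫ p, F (Fin.cons p.1 p.2) ∂(ν 0).prod (Measure.pi fun i => ν i.succ) := by
  have e := (measurePreserving_piFinSuccAbove ν 0).symm
  simp only [Fin.succAbove_zero] at e
  rw [← e.integral_comp (MeasurableEquiv.measurableEmbedding _)]
  simp [MeasurableEquiv.piFinSuccAbove_symm_apply, Fin.insertNthEquiv, Fin.insertNth_zero']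

theorem integrable_fold_max_pi {ι : Type*} [Fintype ι] (ν : ι → Measure ℝ)
    [∀ i, IsProbabilityMeasure (ν i)] (hν : ∀ i c, Integrable (fun t => max t c) (ν i)) (c : ℝ) :
    Integrable (fun x => univ.fold max c x) (Measure.pi ν) := by
  refine integrable_of_le_of_le (g₁ := fun _ => c)
    (g₂ := fun x => |c| + ∑ i, |max (x i) c|) (measurable_fold_max _ c).aestronglyMeasurable
    (ae_of_all _ fun x => (le_fold_max _).2 (Or.inl le_rfl))
    (ae_of_all _ fun x => (fold_max_le _).2 ⟨?_, fun i _ => ?_⟩) (integrable_const c)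
    ((integrable_const _).add (integrable_finsetSum _ fun i _ =>
      integrable_comp_eval (X := fun _ => ℝ) (μ := ν) (hν i c).abs))
  · exact (le_abs_self c).trans (le_add_of_nonneg_right (by positivity))
  · calc x i ≤ |max (x i) c| := (le_max_left _ _).trans (le_abs_self _)
      _ ≤ ∑ j, |max (x j) c| :=
        single_le_sum (f := fun j => |max (x j) c|) (fun j _ => abs_nonneg _) (mem_univ i)
      _ ≤ |c| + ∑ j, |max (x j) c| := le_add_of_nonneg_left (abs_nonneg c)

theorem integrable_max_fold_max_prod {m : ℕ} (A : Measure ℝ) (B : Fin m → Measure ℝ)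
    [IsProbabilityMeasure A] [∀ i, IsProbabilityMeasure (B i)]
    (hA : ∀ c, Integrable (fun t => max t c) A) (hB : ∀ i c, Integrable (fun t => max t c) (B i))
    (c : ℝ) :
    Integrable (fun p : ℝ × (Fin m → ℝ) => max p.1 (univ.fold max c p.2))
      (A.prod (Measure.pi B)) := by
  have := ((hA c).comp_fst (Measure.pi B)).sup ((integrable_fold_max_pi B hB c).comp_snd A)
  refine this.congr (ae_of_all _ fun p => ?_)
  simp only [Pi.sup_apply, max_assoc, ← fold_max_max, max_self]

theorem integral_fold_max_pi_le {m : ℕ} (μ ν : Fin m → Measure ℝ)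
    [∀ i, IsProbabilityMeasure (μ i)] [∀ i, IsProbabilityMeasure (ν i)]
    (hμ : ∀ i c, Integrable (fun t => max t c) (μ i))
    (hν : ∀ i c, Integrable (fun t => max t c) (ν i))
    (h : ∀ i c, ∫ t, max t c ∂ν i ≤ ∫ t, max t c ∂μ i) (c : ℝ) :
    ∫ x, univ.fold max c x ∂Measure.pi ν ≤ ∫ x, univ.fold max c x ∂Measure.pi μ := by
  induction m generalizing c with
  | zero => simp
  | succ m ih =>
    simp only [integral_pi_fin_succ, Fin.fold_max_cons]
    set μ' := fun i : Fin m => μ i.succ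
    set ν' := fun i : Fin m => ν i.succ
    have hνν := integrable_max_fold_max_prod (ν 0) ν' (hν 0) (fun i => hν i.succ) c
    have hνμ := integrable_max_fold_max_prod (ν 0) μ' (hν 0) (fun i => hμ i.succ) c
    have hμμ := integrable_max_fold_max_prod (μ 0) μ' (hμ 0) (fun i => hμ i.succ) c
    calc ∫ p, max p.1 (univ.fold max c p.2) ∂(ν 0).prod (Measure.pi ν')
        = ∫ a, ∫ y, max a (univ.fold max c y) ∂Measure.pi ν' ∂ν 0 := integral_prod _ hνν
      _ ≤ ∫ a, ∫ y, max a (univ.fold max c y) ∂Measure.pi μ' ∂ν 0 := by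
        refine integral_mono hνν.integral_prod_left hνμ.integral_prod_left fun a => ?_
        -- freezing the first coordinate at `a` raises the floor of the rest to `max a c`
        simpa only [fold_max_max] using
          ih μ' ν' (fun i => hμ i.succ) (fun i => hν i.succ) (fun i => h i.succ) (max a c)
      _ = ∫ y, ∫ a, max a (univ.fold max c y) ∂ν 0 ∂Measure.pi μ' := integral_integral_swap hνμ
      _ ≤ ∫ y, ∫ a, max a (univ.fold max c y) ∂μ 0 ∂Measure.pi μ' :=
        integral_mono hνμ.integral_prod_right hμμ.integral_prod_right fun y => h 0 _
      _ = ∫ p, max p.1 (univ.fold max c p.2) ∂(μ 0).prod (Measure.pi μ') :=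
        (integral_prod_symm _ hμμ).symm

section IndependentFamilies

variable {Ω : Type*} [MeasurableSpace Ω] {P : Measure Ω} [IsProbabilityMeasure P] {m : ℕ}

theorem integral_fold_max_eq_pi_map {W : Fin m → Ω → ℝ} (hW : ∀ i, AEMeasurable (W i) P)
    (hWindep : iIndepFun W P) (c : ℝ) :
    ∫ ω, univ.fold max c (fun i => W i ω) ∂P =
      ∫ x, univ.fold max c x ∂Measure.pi fun i => P.map (W i) := by
  rw [← (iIndepFun_iff_map_fun_eq_pi_map hW).1 hWindep,
    integral_map (aemeasurable_pi_lambda _ hW) (measurable_fold_max _ c).aestronglyMeasurable]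

theorem integral_fold_max_le_of_iIndepFun {Ω' : Type*} [MeasurableSpace Ω'] {Q : Measure Ω'}
    [IsProbabilityMeasure Q] {W : Fin m → Ω → ℝ} {V : Fin m → Ω' → ℝ}
    (hW : ∀ i, AEMeasurable (W i) P) (hV : ∀ i, AEMeasurable (V i) Q)
    (hWindep : iIndepFun W P) (hVindep : iIndepFun V Q)
    (hWint : ∀ i c, Integrable (fun ω => max (W i ω) c) P)
    (hVint : ∀ i c, Integrable (fun ω => max (V i ω) c) Q)
    (h : ∀ i c, ∫ ω, max (V i ω) c ∂Q ≤ ∫ ω, max (W i ω) c ∂P) (c : ℝ) :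
    ∫ ω, univ.fold max c (fun i => V i ω) ∂Q ≤ ∫ ω, univ.fold max c (fun i => W i ω) ∂P := by
  rw [integral_fold_max_eq_pi_map hW hWindep, integral_fold_max_eq_pi_map hV hVindep]
  have (i : Fin m) : IsProbabilityMeasure (P.map (W i)) := Measure.isProbabilityMeasure_map (hW i)
  have (i : Fin m) : IsProbabilityMeasure (Q.map (V i)) := Measure.isProbabilityMeasure_map (hV i)
  have hmax (c : ℝ) : Measurable fun t : ℝ => max t c := measurable_id.max measurable_const
  refine integral_fold_max_pi_le _ _ (fun i c => ?_) (fun i c => ?_) (fun i c => ?_) c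
  · exact (integrable_map_measure (hmax c).aestronglyMeasurable (hW i)).2 (hWint i c)
  · exact (integrable_map_measure (hmax c).aestronglyMeasurable (hV i)).2 (hVint i c)
  · rw [integral_map (hW i) (hmax c).aestronglyMeasurable,
      integral_map (hV i) (hmax c).aestronglyMeasurable]
    exact h i c

end IndependentFamilies

theorem StochasticallyOptimistic.integral_max_le {Ω₁ Ω₂ : Type*} [MeasurableSpace Ω₁]
    [MeasurableSpace Ω₂] {P : Measure Ω₁} {Q : Measure Ω₂} {X : Ω₁ → ℝ} {Y : Ω₂ → ℝ}
    (h : StochasticallyOptimistic P Q X Y) {u : ℝ → ℝ} (hu : ConvexOn ℝ Set.univ u)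
    (hmono : Monotone u) (c : ℝ) (hX : Integrable (fun ω => max (u (X ω)) c) P)
    (hY : Integrable (fun ω => max (u (Y ω)) c) Q) :
    ∫ ω, max (u (Y ω)) c ∂Q ≤ ∫ ω, max (u (X ω)) c ∂P :=
  h (fun t => max (u t) c) (hu.sup (convexOn_const c convex_univ))
    (fun _ _ hst => max_le_max_right c (hmono hst)) hX hY

theorem stochasticallyOptimistic_max {Ω : Type*} [MeasurableSpace Ω]
    (P : Measure Ω) [IsProbabilityMeasure P] (n : ℕ)
    (X Y : Fin (n + 1) → Ω → ℝ)
    (hXmeas : ∀ i, Measurable (X i)) (hYmeas : ∀ i, Measurable (Y i))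
    (hXindep : iIndepFun X P)
    (hYindep : iIndepFun Y P)
    (hSO : ∀ i, StochasticallyOptimistic P P (X i) (Y i)) :
    StochasticallyOptimistic P P
      (fun ω => Finset.univ.sup' Finset.univ_nonempty fun i => X i ω)
      (fun ω => Finset.univ.sup' Finset.univ_nonempty fun i => Y i ω) := by
  intro u hu hmono hIX hIY
  have hcoord (Z : Fin (n + 1) → Ω → ℝ) (hZ : ∀ i, Measurable (Z i))
      (hI : Integrable (fun ω => u (univ.sup' univ_nonempty fun i => Z i ω)) P) (i) (c : ℝ) :
      Integrable (fun ω => max (u (Z i ω)) c) P :=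
    integrable_max_const_of_le (hmono.measurable.comp (hZ i)).aestronglyMeasurable hI
      (fun ω => hmono (le_sup' (fun j => Z j ω) (mem_univ i))) c
  refine integral_le_of_forall_integral_max_le hIY hIX fun c => ?_
  simp only [hmono.max_apply_sup'_eq_fold_max]
  exact integral_fold_max_le_of_iIndepFun
    (fun i => (hmono.measurable.comp (hXmeas i)).aemeasurable)
    (fun i => (hmono.measurable.comp (hYmeas i)).aemeasurable)
    (hXindep.comp _ fun _ => hmono.measurable) (hYindep.comp _ fun _ => hmono.measurable)
    (hcoord X hXmeas hIX) (hcoord Y hYmeas hIY)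
    (fun i c => (hSO i).integral_max_le hu hmono c (hcoord X hXmeas hIX i c)
      (hcoord Y hYmeas hIY i c)) c
end
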